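/- arXiv:2604.07479 — 2 statements merged into one kernel-verified Lean document; each statement's English description precedes it below -/
import Mathlib

section
/- Let R be a probability measure and S : Ω → ℝ measurable with 0 < Z := E_R[e^{−S}] < ∞. Among all probability measures P absolutely continuous with respect to R with finite relative entropy, the functional P ↦ E_P[S] + KL(P‖R) is minimized uniquely by P* with dP*/dR = e^{−S}/Z, and the minimum value equals −log Z. -/
/-!
Write `P* = R.tilted (-S)`, i.e. `dP*/dR = e^{-S}/Z`. For `P ≪ R` the density of `P` with respect to
`P*` is `e^{S} Z · dP/dR`, so taking logarithms and integrating against `P` gives the identity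
`E_P[S] + KL(P‖R) = -log Z + KL(P‖P*)`. Gibbs' inequality `KL(P‖P*) ≥ 0`, with equality only
for `P = P*`, then yields both the minimum value and the uniqueness of the minimizer.
-/

open MeasureTheory Real InformationTheory

lemma integral_llr_sub_integral_eq_toReal_klDiv_tilted {Ω : Type*} [MeasurableSpace Ω]
    {μ ν : Measure Ω} [IsProbabilityMeasure μ] [SigmaFinite ν] [NeZero ν] {f : Ω → ℝ}
    (hμν : μ ≪ ν) (hfμ : Integrable f μ) (hfν : Integrable (fun x ↦ exp (f x)) ν)
    (h_int : Integrable (llr μ ν) μ) :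
    ∫ x, llr μ ν x ∂μ - ∫ x, f x ∂μ
      = (klDiv μ (ν.tilted f)).toReal - log (∫ x, exp (f x) ∂ν) := by
  have := isProbabilityMeasure_tilted hfν
  rw [toReal_klDiv_of_measure_eq (hμν.trans (absolutelyContinuous_tilted hfν))
    (by simp only [measure_univ]), integral_llr_tilted_right hμν hfμ hfν h_int]
  ring

lemma eq_of_toReal_klDiv_eq_zero {Ω : Type*} [MeasurableSpace Ω] {μ ν : Measure Ω}
    [IsFiniteMeasure μ] [IsFiniteMeasure ν] (hμν : μ ≪ ν) (h_int : Integrable (llr μ ν) μ)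
    (h : (klDiv μ ν).toReal = 0) : μ = ν :=
  klDiv_eq_zero_iff.mp <|
    ((ENNReal.toReal_eq_zero_iff _).mp h).resolve_right (klDiv_ne_top hμν h_int)

theorem gibbs_variational_principle_general {Ω : Type*} [MeasurableSpace Ω]
    (R : Measure Ω) [IsProbabilityMeasure R]
    (S : Ω → ℝ)
    (hint : Integrable (fun ω => Real.exp (-S ω)) R)
    (Z : ℝ) (hZ : Z = ∫ ω, Real.exp (-S ω) ∂ R)
    (Pstar : Measure Ω)
    (hPstar : Pstar = R.withDensity (fun ω => ENNReal.ofReal (Real.exp (-S ω) / Z)))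
    (hSstar : Integrable S Pstar)
    (hKLstar : Integrable (fun ω => Real.log (Pstar.rnDeriv R ω).toReal) Pstar) :
    ((∫ ω, S ω ∂Pstar) + ∫ ω, Real.log (Pstar.rnDeriv R ω).toReal ∂Pstar
        = -Real.log Z) ∧
    ∀ (P : Measure Ω), IsProbabilityMeasure P → P ≪ R →
      Integrable S P →
      Integrable (fun ω => Real.log (P.rnDeriv R ω).toReal) P →
      (-Real.log Z
          ≤ (∫ ω, S ω ∂P) + ∫ ω, Real.log (P.rnDeriv R ω).toReal ∂P) ∧
      ((∫ ω, S ω ∂P) + (∫ ω, Real.log (P.rnDeriv R ω).toReal ∂P)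
          = -Real.log Z → P = Pstar) := by
  have hPstar_tilted : Pstar = R.tilted (fun ω => -S ω) := by
    rw [hPstar, Measure.tilted, hZ]
  have decomposition : ∀ (P : Measure Ω) [IsProbabilityMeasure P], P ≪ R → Integrable S P →
      Integrable (llr P R) P →
      (∫ ω, S ω ∂P) + ∫ ω, log (P.rnDeriv R ω).toReal ∂P
        = -log Z + (klDiv P Pstar).toReal := by
    intro P _ hPR hSP hKL
    have h := integral_llr_sub_integral_eq_toReal_klDiv_tilted (f := fun ω => -S ω)
      hPR hSP.neg hint hKL
    rw [integral_neg, ← hPstar_tilted, ← hZ] at h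
    unfold llr at h
    linarith
  have : IsProbabilityMeasure Pstar := hPstar_tilted ▸ isProbabilityMeasure_tilted hint
  have hPstarR : Pstar ≪ R := hPstar_tilted ▸ tilted_absolutelyContinuous R _
  refine ⟨by simpa only [klDiv_self, ENNReal.toReal_zero, add_zero] using
      decomposition Pstar hPstarR hSstar hKLstar,
    fun P _ hPR hSP hKL => ⟨?_, fun h_eq => ?_⟩⟩
  · linarith [decomposition P hPR hSP hKL, ENNReal.toReal_nonneg (a := klDiv P Pstar)]
  · have hPPstar : P ≪ Pstar := hPstar_tilted ▸ hPR.trans (absolutelyContinuous_tilted hint)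
    have hKL_star : Integrable (llr P Pstar) P :=
      hPstar_tilted ▸ integrable_llr_tilted_right hPR hSP.neg hKL hint
    exact eq_of_toReal_klDiv_eq_zero hPPstar hKL_star (by linarith [decomposition P hPR hSP hKL])

/-- Gibbs variational principle: among probability measures `P ≪ R` with
finite relative entropy, `E_P[S] + KL(P‖R)` is uniquely minimized by the
tilted measure `dP*/dR = e^{−S}/Z`, with minimum value `−log Z`,
where `KL(P‖R) = ∫ log(dP/dR) dP`. -/
theorem gibbs_variational_principle {Ω : Type*} [MeasurableSpace Ω]
    (R : Measure Ω) [IsProbabilityMeasure R]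
    (S : Ω → ℝ) (hS : Measurable S)
    (hint : Integrable (fun ω => Real.exp (-S ω)) R)
    (Z : ℝ) (hZ : Z = ∫ ω, Real.exp (-S ω) ∂ R) (hZpos : 0 < Z)
    (Pstar : Measure Ω)
    (hPstar : Pstar = R.withDensity (fun ω => ENNReal.ofReal (Real.exp (-S ω) / Z)))
    (hSstar : Integrable S Pstar)
    (hKLstar : Integrable (fun ω => Real.log (Pstar.rnDeriv R ω).toReal) Pstar) :
    ((∫ ω, S ω ∂Pstar) + ∫ ω, Real.log (Pstar.rnDeriv R ω).toReal ∂Pstar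
        = -Real.log Z) ∧
    ∀ (P : Measure Ω), IsProbabilityMeasure P → P ≪ R →
      Integrable S P →
      Integrable (fun ω => Real.log (P.rnDeriv R ω).toReal) P →
      (-Real.log Z
          ≤ (∫ ω, S ω ∂P) + ∫ ω, Real.log (P.rnDeriv R ω).toReal ∂P) ∧
      ((∫ ω, S ω ∂P) + (∫ ω, Real.log (P.rnDeriv R ω).toReal ∂P)
          = -Real.log Z → P = Pstar) :=
  gibbs_variational_principle_general R S hint Z hZ Pstar hPstar hSstar hKLstar
end

section
/- Let Z¹,…,Zᴺ : [0,T] × ℝⁿ → ℝ be positive C^{1,2} functions, α ∈ ℝ^{N×N} invertible with β = α⁻¹, and define Jⁱ(t,x) = −∑_j α_{ij} log Zʲ(t,x). Suppose each Zⁱ satisfies the linear PDE −∂_t Zⁱ = fᵀ∇_x Zⁱ + (1/2)Tr(G ∇²_x Zⁱ) − (∑_j β_{ij} Cʲ(t,x)) Zⁱ, where f : ℝⁿ → ℝⁿ, G = g gᵀ for g : ℝⁿ → ℝ^{n×m}, and Cʲ are given functions. Then each Jⁱ satisfies the nonlinear PDE −∂_t Jⁱ = Cⁱ(t,x) + fᵀ∇_x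 Jⁱ + (1/2)Tr(G ∇²_x Jⁱ) − (1/2) ∇𝐉ᵀ (βᵀ ⊗ g) diag_j(α_{ij} I_m) (β ⊗ gᵀ) ∇𝐉, where ∇𝐉 is the stacked gradient (∇_x J¹,…,∇_x Jᴺ). -/
open Matrix Kronecker InnerProductSpace

/-! With `L φ = f ⬝ ∇φ + ½ tr(g gᵀ ∇²φ)`, the identity `∇² log Z = Z⁻¹ ∇²Z - ∇log Z ∇log Zᵀ`
turns the linear equation for `Zʲ` into the scalar Hamilton–Jacobi–Bellman equation
`-∂ₜwʲ = (β C)ʲ + L wʲ - ½ |gᵀ∇wʲ|²` for `wʲ = -log Zʲ`. Since `Jⁱ = ∑ⱼ αᵢⱼ wʲ` and `L` is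
linear, the `α`-weighted sum of these equations gives the claim: `α β = 1` recovers `Cⁱ`, and
`β α = 1` makes `(β ⊗ gᵀ) ∇𝐉` the stacked vector of the `gᵀ∇wʲ`, so the Kronecker quadratic
form is `∑ⱼ αᵢⱼ |gᵀ∇wʲ|²`. -/

section MatrixIdentities

variable {ι κ μ R : Type*} [Fintype ι] [CommSemiring R]

theorem trace_mul_transpose_mul_vecMulVec [Fintype κ] (G : Matrix ι κ R) (v : ι → R) :
    (G * Gᵀ * vecMulVec v v).trace = (Gᵀ *ᵥ v) ⬝ᵥ (Gᵀ *ᵥ v) := by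
  rw [mul_vecMulVec, trace_vecMulVec, ← mulVec_mulVec, dotProduct_comm, dotProduct_mulVec,
    ← mulVec_transpose]

variable [DecidableEq ι]

theorem one_kronecker_mulVec_apply [Fintype μ] (B : Matrix κ μ R) (ω : ι × μ → R) (j : ι) (c : κ) :
    (((1 : Matrix ι ι R) ⊗ₖ B) *ᵥ ω) (j, c) = (B *ᵥ fun k => ω (j, k)) c := by
  simp [mulVec, dotProduct, Fintype.sum_prod_type, one_apply, ite_mul, Finset.sum_ite_eq]

theorem dotProduct_diagonal_kronecker_one_mulVec [Fintype μ] [DecidableEq μ] (d : ι → R)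
    (v : ι × μ → R) :
    v ⬝ᵥ ((diagonal d ⊗ₖ (1 : Matrix μ μ R)) *ᵥ v)
      = ∑ j, d j * ((fun k => v (j, k)) ⬝ᵥ fun k => v (j, k)) := by
  rw [← diagonal_one, diagonal_kronecker_diagonal]
  simp only [dotProduct, mulVec_diagonal, Fintype.sum_prod_type, Finset.mul_sum, mul_one]
  exact Finset.sum_congr rfl fun j _ => Finset.sum_congr rfl fun k _ => by ring

theorem kronecker_quadForm_eq_sum [Fintype κ] [DecidableEq κ] [Fintype μ] [DecidableEq μ]
    (α β : Matrix ι ι R) (hβα : β * α = 1) (B : Matrix κ μ R) (d : ι → R)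
    (ω : ι × κ → R) (u : ι × κ → R) (hu : u = (α ⊗ₖ (1 : Matrix κ κ R)) *ᵥ ω) :
    u ⬝ᵥ ((βᵀ ⊗ₖ B) *ᵥ ((diagonal d ⊗ₖ (1 : Matrix μ μ R)) *ᵥ ((β ⊗ₖ Bᵀ) *ᵥ u)))
      = ∑ j, d j * ((Bᵀ *ᵥ fun k => ω (j, k)) ⬝ᵥ (Bᵀ *ᵥ fun k => ω (j, k))) := by
  have hT : βᵀ ⊗ₖ B = (β ⊗ₖ Bᵀ)ᵀ := kroneckerMap_transpose _ β Bᵀ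
  have hv : (β ⊗ₖ Bᵀ) *ᵥ u = ((1 : Matrix ι ι R) ⊗ₖ Bᵀ) *ᵥ ω := by
    rw [hu, mulVec_mulVec, ← mul_kronecker_mul, hβα, Matrix.mul_one]
  rw [dotProduct_mulVec, hT, vecMul_transpose, hv, dotProduct_diagonal_kronecker_one_mulVec]
  simp only [one_kronecker_mulVec_apply]

end MatrixIdentities

section Gradient

variable {F : Type*} [NormedAddCommGroup F] [InnerProductSpace ℝ F] [CompleteSpace F]

theorem ContDiff.differentiable_gradient {φ : F → ℝ} (h : ContDiff ℝ 2 φ) :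
    Differentiable ℝ (gradient φ) :=
  (toDual ℝ F).symm.toContinuousLinearEquiv.differentiable.comp
    ((h.fderiv_right (m := 1) (by norm_num)).differentiable one_ne_zero)

theorem hasGradientAt_fun_sum_const_mul {ι : Type*} [Fintype ι] {φ : ι → F → ℝ} (c : ι → ℝ)
    {x : F} (h : ∀ j, DifferentiableAt ℝ (φ j) x) :
    HasGradientAt (fun y => ∑ j, c j * φ j y) (∑ j, c j • gradient (φ j) x) x := by
  rw [hasGradientAt_iff_hasFDerivAt, map_sum]
  simp only [map_smul, toDual_gradient]
  exact HasFDerivAt.fun_sum fun j _ => (h j).hasFDerivAt.const_mul (c j)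

theorem hasGradientAt_neg_log {Z : F → ℝ} {x : F} (hd : DifferentiableAt ℝ Z x) (hx : Z x ≠ 0) :
    HasGradientAt (fun y => -Real.log (Z y)) (-(Z x)⁻¹ • gradient Z x) x := by
  rw [hasGradientAt_iff_hasFDerivAt, map_smul, toDual_gradient]
  exact ((Real.hasDerivAt_log hx).comp_hasFDerivAt x hd.hasFDerivAt).neg.congr_fderiv (by simp)

end Gradient

section Euclidean

variable {n : ℕ}
local notation "E" => EuclideanSpace ℝ (Fin n)

theorem gradient_apply_eq_fderiv_single (φ : E → ℝ) (x : E) (b : Fin n) :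
    gradient φ x b = fderiv ℝ φ x (EuclideanSpace.single b 1) := by
  rw [← inner_gradient_left, EuclideanSpace.inner_single_right]
  simp

noncomputable def hessianMatrix (φ : E → ℝ) (x : E) : Matrix (Fin n) (Fin n) ℝ :=
  Matrix.of fun a b => fderiv ℝ (gradient φ) x (EuclideanSpace.single b 1) a

theorem hessianMatrix_fun_sum_const_mul {ι : Type*} [Fintype ι] {φ : ι → E → ℝ} (c : ι → ℝ)
    (h : ∀ j, ContDiff ℝ 2 (φ j)) (x : E) :
    hessianMatrix (fun y => ∑ j, c j * φ j y) x = ∑ j, c j • hessianMatrix (φ j) x := by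
  have hgrad : gradient (fun y => ∑ j, c j * φ j y) = fun y => ∑ j, c j • gradient (φ j) y :=
    funext fun y => (hasGradientAt_fun_sum_const_mul c fun j =>
      ((h j).differentiable (by norm_num)).differentiableAt).gradient
  have hD : HasFDerivAt (fun y => ∑ j, c j • gradient (φ j) y)
      (∑ j, c j • fderiv ℝ (gradient (φ j)) x) x :=
    HasFDerivAt.fun_sum fun j _ => ((h j).differentiable_gradient x).hasFDerivAt.const_smul (c j)
  ext a b
  simp [hessianMatrix, hgrad, hD.fderiv, Matrix.sum_apply]

theorem hessianMatrix_neg_log {Z : E → ℝ} (hZ : ContDiff ℝ 2 Z) (hne : ∀ y, Z y ≠ 0) (x : E) :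
    hessianMatrix (fun y => -Real.log (Z y)) x
      = vecMulVec (gradient (fun y => -Real.log (Z y)) x).ofLp
          (gradient (fun y => -Real.log (Z y)) x).ofLp - (Z x)⁻¹ • hessianMatrix Z x := by
  have hd : Differentiable ℝ Z := hZ.differentiable (by norm_num)
  have hgrad : gradient (fun y => -Real.log (Z y)) = fun y => -(Z y)⁻¹ • gradient Z y :=
    funext fun y => (hasGradientAt_neg_log (hd y) (hne y)).gradient
  have hinv : HasFDerivAt (fun y => -(Z y)⁻¹) (((Z x)⁻¹) ^ 2 • fderiv ℝ Z x) x :=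
    ((hasDerivAt_inv (hne x)).comp_hasFDerivAt x (hd x).hasFDerivAt).neg.congr_fderiv (by simp)
  have hD : HasFDerivAt (fun y => -(Z y)⁻¹ • gradient Z y)
      (-(Z x)⁻¹ • fderiv ℝ (gradient Z) x
        + (((Z x)⁻¹) ^ 2 • fderiv ℝ Z x).smulRight (gradient Z x)) x :=
    hinv.smul (hZ.differentiable_gradient x).hasFDerivAt
  ext a b
  rw [hessianMatrix, of_apply, hgrad, hD.fderiv]
  simp only [_root_.add_apply, _root_.smul_apply, ContinuousLinearMap.smulRight_apply,
    smul_eq_mul, PiLp.add_apply, PiLp.smul_apply, gradient_apply_eq_fderiv_single, hessianMatrix,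
    Matrix.sub_apply, Matrix.smul_apply, vecMulVec_apply, of_apply]
  ring

variable {m : ℕ}

noncomputable def diffusionGenerator (f : E → E) (g : E → Matrix (Fin n) (Fin m) ℝ)
    (φ : E → ℝ) (x : E) : ℝ :=
  inner ℝ (f x) (gradient φ x) + (1/2) * ((g x * (g x)ᵀ) * hessianMatrix φ x).trace

theorem diffusionGenerator_fun_sum_const_mul (f : E → E) (g : E → Matrix (Fin n) (Fin m) ℝ)
    {ι : Type*} [Fintype ι] {φ : ι → E → ℝ} (c : ι → ℝ) (h : ∀ j, ContDiff ℝ 2 (φ j)) (x : E) :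
    diffusionGenerator f g (fun y => ∑ j, c j * φ j y) x
      = ∑ j, c j * diffusionGenerator f g (φ j) x := by
  rw [diffusionGenerator, hessianMatrix_fun_sum_const_mul c h, (hasGradientAt_fun_sum_const_mul c
    fun j => ((h j).differentiable (by norm_num)).differentiableAt).gradient]
  simp only [diffusionGenerator, inner_sum, inner_smul_right, Matrix.mul_smul, trace_sum,
    trace_smul, smul_eq_mul, Finset.mul_sum, ← Finset.sum_add_distrib]
  exact Finset.sum_congr rfl fun j _ => by ring

theorem diffusionGenerator_neg_log (f : E → E) (g : E → Matrix (Fin n) (Fin m) ℝ) {Z : E → ℝ}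
    (hZ : ContDiff ℝ 2 Z) (hne : ∀ y, Z y ≠ 0) (x : E) :
    diffusionGenerator f g (fun y => -Real.log (Z y)) x
      = -(Z x)⁻¹ * diffusionGenerator f g Z x
        + (1/2) * (((g x)ᵀ *ᵥ (gradient (fun y => -Real.log (Z y)) x).ofLp) ⬝ᵥ
            ((g x)ᵀ *ᵥ (gradient (fun y => -Real.log (Z y)) x).ofLp)) := by
  rw [diffusionGenerator, hessianMatrix_neg_log hZ hne, Matrix.mul_sub, trace_sub,
    trace_mul_transpose_mul_vecMulVec, (hasGradientAt_neg_log
      ((hZ.differentiable (by norm_num)) x) (hne x)).gradient, diffusionGenerator]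
  simp only [inner_smul_right, Matrix.mul_smul, trace_smul, smul_eq_mul]
  ring

theorem coleHopf_neg_log_pde (f : E → E) (g : E → Matrix (Fin n) (Fin m) ℝ) {Z : ℝ → E → ℝ}
    {c t : ℝ} {x : E} (hZx : ContDiff ℝ 2 (Z t)) (hne : ∀ y, Z t y ≠ 0)
    (hZt : DifferentiableAt ℝ (fun s => Z s x) t)
    (hPDE : -(deriv (fun s => Z s x) t) = diffusionGenerator f g (Z t) x - c * Z t x) :
    -(deriv (fun s => -Real.log (Z s x)) t)
      = c + diffusionGenerator f g (fun y => -Real.log (Z t y)) x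
        - (1/2) * (((g x)ᵀ *ᵥ (gradient (fun y => -Real.log (Z t y)) x).ofLp) ⬝ᵥ
            ((g x)ᵀ *ᵥ (gradient (fun y => -Real.log (Z t y)) x).ofLp)) := by
  rw [(hZt.hasDerivAt.log (hne x)).fun_neg.deriv, diffusionGenerator_neg_log f g hZx hne]
  field_simp [hne x]
  linarith

theorem neg_deriv_fun_sum_const_mul_of_hjb (f : E → E) (g : E → Matrix (Fin n) (Fin m) ℝ)
    {ι : Type*} [Fintype ι] {w : ι → ℝ → E → ℝ} (c : ι → ℝ) {V Q : ι → ℝ} {t : ℝ} {x : E}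
    (hwx : ∀ j, ContDiff ℝ 2 (w j t)) (hwt : ∀ j, DifferentiableAt ℝ (fun s => w j s x) t)
    (hPDE : ∀ j, -(deriv (fun s => w j s x) t)
      = V j + diffusionGenerator f g (w j t) x - (1/2) * Q j) :
    -(deriv (fun s => ∑ j, c j * w j s x) t)
      = ∑ j, c j * V j + diffusionGenerator f g (fun y => ∑ j, c j * w j t y) x
        - (1/2) * ∑ j, c j * Q j := by
  rw [(HasDerivAt.fun_sum fun j _ => (hwt j).hasDerivAt.const_mul (c j)).deriv,
    diffusionGenerator_fun_sum_const_mul f g c hwx, Finset.mul_sum, ← Finset.sum_neg_distrib]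
  simp only [← Finset.sum_add_distrib, ← Finset.sum_sub_distrib]
  exact Finset.sum_congr rfl fun j _ => by linear_combination c j * hPDE j

end Euclidean

theorem multivariate_coleHopf_linearization_general
    {N n m : ℕ}
    (α β : Matrix (Fin N) (Fin N) ℝ)
    (hαβ : α * β = 1) (hβα : β * α = 1)
    (f : EuclideanSpace ℝ (Fin n) → EuclideanSpace ℝ (Fin n))
    (g : EuclideanSpace ℝ (Fin n) → Matrix (Fin n) (Fin m) ℝ)
    (C : Fin N → ℝ → EuclideanSpace ℝ (Fin n) → ℝ)
    (Z : Fin N → ℝ → EuclideanSpace ℝ (Fin n) → ℝ)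
    (hZpos : ∀ i t x, 0 < Z i t x)
    (hZx : ∀ i t, ContDiff ℝ 2 (Z i t))
    (hZt : ∀ i x, Differentiable ℝ (fun t => Z i t x))
    (hPDE : ∀ i t x, -(deriv (fun s => Z i s x) t)
        = inner ℝ (f x) (gradient (Z i t) x)
          + (1/2) * ((g x * (g x)ᵀ) *
              (Matrix.of fun a b =>
                fderiv ℝ (gradient (Z i t)) x (EuclideanSpace.single b 1) a)).trace
          - (∑ j, β i j * C j t x) * Z i t x)
    (J : Fin N → ℝ → EuclideanSpace ℝ (Fin n) → ℝ)
    (hJ : ∀ i t x, J i t x = -∑ j, α i j * Real.log (Z j t x)) :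
    ∀ i t x, -(deriv (fun s => J i s x) t)
        = C i t x + inner ℝ (f x) (gradient (J i t) x)
          + (1/2) * ((g x * (g x)ᵀ) *
              (Matrix.of fun a b =>
                fderiv ℝ (gradient (J i t)) x (EuclideanSpace.single b 1) a)).trace
          - (1/2) * ((fun p : Fin N × Fin n => gradient (J p.1 t) x p.2) ⬝ᵥ
              ((βᵀ ⊗ₖ g x).mulVec
                (((Matrix.diagonal (fun j => α i j)) ⊗ₖ
                    (1 : Matrix (Fin m) (Fin m) ℝ)).mulVec
                  ((β ⊗ₖ (g x)ᵀ).mulVec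
                    (fun p : Fin N × Fin n => gradient (J p.1 t) x p.2))))) := by
  intro i t x
  set w : Fin N → ℝ → EuclideanSpace ℝ (Fin n) → ℝ := fun j s y => -Real.log (Z j s y)
  obtain rfl : J = fun l s y => ∑ j, α l j * w j s y := by
    funext l s y
    simp [hJ, w, Finset.sum_neg_distrib]
  have hw : ∀ j s, ContDiff ℝ 2 (w j s) := fun j s =>
    ((hZx j s).log fun y => (hZpos j s y).ne').neg
  have hJPDE := neg_deriv_fun_sum_const_mul_of_hjb f g (α i) (hw · t)
    (fun j => ((hZt j x t).log (hZpos j t x).ne').neg)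
    (fun j => coleHopf_neg_log_pde f g (hZx j t) (fun y => (hZpos j t y).ne') (hZt j x t)
      (c := (β *ᵥ fun k => C k t x) j) (hPDE j t x))
  have hC : ∑ j, α i j * (β *ᵥ fun k => C k t x) j = C i t x := by
    rw [show ∑ j, α i j * (β *ᵥ fun k => C k t x) j = (α *ᵥ β *ᵥ fun k => C k t x) i from rfl,
      mulVec_mulVec, hαβ, one_mulVec]
  have hgrad : ∀ l, gradient (fun y => ∑ j, α l j * w j t y) x
      = ∑ j, α l j • gradient (w j t) x := fun l =>
    (hasGradientAt_fun_sum_const_mul (α l) fun j =>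
      (hw j t).differentiable (by norm_num) x).gradient
  have hquad := kronecker_quadForm_eq_sum α β hβα (g x) (fun j => α i j)
    (fun p => gradient (w p.1 t) x p.2)
    (fun p => gradient (fun y => ∑ j, α p.1 j * w j t y) x p.2)
    (by funext ⟨l, b⟩; simp [hgrad, mulVec, dotProduct, Fintype.sum_prod_type, one_apply])
  rw [hC, diffusionGenerator] at hJPDE
  rw [hquad, hJPDE, add_assoc]
  rfl

/-- Multivariate Cole–Hopf linearization: if the positive functions `Zⁱ`
solve the decoupled linear PDEs
`−∂_t Zⁱ = fᵀ∇_x Zⁱ + (1/2)Tr(g gᵀ ∇²_x Zⁱ) − (∑ j, β i j * Cʲ) Zⁱ`,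
then `Jⁱ = −∑ j, α i j * log Zʲ` solve the coupled nonlinear HJB PDEs
`−∂_t Jⁱ = Cⁱ + fᵀ∇_x Jⁱ + (1/2)Tr(g gᵀ ∇²_x Jⁱ)
  − (1/2)∇𝐉ᵀ(βᵀ ⊗ g) diag_j(α i j • I_m)(β ⊗ gᵀ)∇𝐉`,
where gradients are with respect to `x`, the Hessian matrix of `φ` at `x` has
entries `(∇²φ)_{a b} = fderiv (gradient φ) x (e_b) a`, and `∇𝐉` is the
stacked gradient. -/
theorem multivariate_coleHopf_linearization
    {N n m : ℕ} (T : ℝ) (hT : 0 < T)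
    (α β : Matrix (Fin N) (Fin N) ℝ)
    (hαβ : α * β = 1) (hβα : β * α = 1)
    (f : EuclideanSpace ℝ (Fin n) → EuclideanSpace ℝ (Fin n))
    (g : EuclideanSpace ℝ (Fin n) → Matrix (Fin n) (Fin m) ℝ)
    (C : Fin N → ℝ → EuclideanSpace ℝ (Fin n) → ℝ)
    (Z : Fin N → ℝ → EuclideanSpace ℝ (Fin n) → ℝ)
    (hZpos : ∀ i t x, 0 < Z i t x)
    (hZx : ∀ i t, ContDiff ℝ 2 (Z i t))
    (hZt : ∀ i x, Differentiable ℝ (fun t => Z i t x))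
    (hPDE : ∀ i t x, -(deriv (fun s => Z i s x) t)
        = inner ℝ (f x) (gradient (Z i t) x)
          + (1/2) * ((g x * (g x)ᵀ) *
              (Matrix.of fun a b =>
                fderiv ℝ (gradient (Z i t)) x (EuclideanSpace.single b 1) a)).trace
          - (∑ j, β i j * C j t x) * Z i t x)
    (J : Fin N → ℝ → EuclideanSpace ℝ (Fin n) → ℝ)
    (hJ : ∀ i t x, J i t x = -∑ j, α i j * Real.log (Z j t x)) :
    ∀ i t x, -(deriv (fun s => J i s x) t)
        = C i t x + inner ℝ (f x) (gradient (J i t) x)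
          + (1/2) * ((g x * (g x)ᵀ) *
              (Matrix.of fun a b =>
                fderiv ℝ (gradient (J i t)) x (EuclideanSpace.single b 1) a)).trace
          - (1/2) * ((fun p : Fin N × Fin n => gradient (J p.1 t) x p.2) ⬝ᵥ
              ((βᵀ ⊗ₖ g x).mulVec
                (((Matrix.diagonal (fun j => α i j)) ⊗ₖ
                    (1 : Matrix (Fin m) (Fin m) ℝ)).mulVec
                  ((β ⊗ₖ (g x)ᵀ).mulVec
                    (fun p : Fin N × Fin n => gradient (J p.1 t) x p.2))))) :=
  multivariate_coleHopf_linearization_general α β hαβ hβα f g C Z hZpos hZx hZt hPDE J hJ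
end
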